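/- For vectors b, v ∈ ℝ³ with b ≠ 0, the perpendicular distance from the point b + v to the line through the origin in direction b equals |v × b|/|b|. Consequently, for a canonical two-qubit state the coherence of the steered state b_M = b + Tᵀm in the eigenbasis of ρ_B equals the distance from b_M to the line spanned by b, and is at most |Tᵀm| ≤ c_1 where c_1 is the largest singular value of T. -/
import Mathlib


open Matrix BigOperators

noncomputable section

def cross3 (u v : Fin 3 → ℝ) : Fin 3 → ℝ :=
  ![u 1 * v 2 - u 2 * v 1, u 2 * v 0 - u 0 * v 2, u 0 * v 1 - u 1 * v 0]

def norm3 (v : Fin 3 → ℝ) : ℝ := Real.sqrt (∑ i, v i ^ 2)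

def dot3 (u v : Fin 3 → ℝ) : ℝ := ∑ i, u i * v i

def Ttm (T : Matrix (Fin 3) (Fin 3) ℝ) (m : Fin 3 → ℝ) : Fin 3 → ℝ :=
  fun j => ∑ i, T i j * m i


lemma sumsq_nonneg (x : Fin 3 → ℝ) : 0 ≤ ∑ i, x i ^ 2 :=
  Finset.sum_nonneg fun _ _ => sq_nonneg _
lemma norm3_nonneg (x : Fin 3 → ℝ) : 0 ≤ norm3 x := Real.sqrt_nonneg _
lemma norm3_sq (x : Fin 3 → ℝ) : norm3 x ^ 2 = ∑ i, x i ^ 2 :=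
  Real.sq_sqrt (sumsq_nonneg x)
lemma norm3_pos {x : Fin 3 → ℝ} (hx : x ≠ 0) : 0 < norm3 x := by
  apply Real.sqrt_pos.mpr
  obtain ⟨i, hi⟩ := Function.ne_iff.mp hx
  have hab : 0 < |x i| := abs_pos.mpr hi
  have h1 : 0 < x i ^ 2 := by rw [← sq_abs]; positivity
  have h2 : x i ^ 2 ≤ ∑ j, x j ^ 2 :=
    Finset.single_le_sum (fun j _ => sq_nonneg (x j)) (Finset.mem_univ i)
  linarith
lemma norm3_smul (c : ℝ) (x : Fin 3 → ℝ) :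
    norm3 (fun i => c * x i) = |c| * norm3 x := by
  unfold norm3
  rw [show (∑ i, (c * x i) ^ 2) = c ^ 2 * ∑ i, x i ^ 2 by
    rw [Finset.mul_sum]; congr 1; funext i; ring,
    Real.sqrt_mul (sq_nonneg c), Real.sqrt_sq_eq_abs]
lemma norm3_div (x : Fin 3 → ℝ) (c : ℝ) (hc : 0 < c) :
    norm3 (fun i => x i / c) = norm3 x / c := by
  have h := norm3_smul c⁻¹ x
  simp only [inv_mul_eq_div] at h
  rw [h, abs_of_pos (inv_pos.mpr hc), inv_mul_eq_div]

lemma key (b : Fin 3 → ℝ) (hb : b ≠ 0) (x : Fin 3 → ℝ) :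
    norm3 (fun i => x i - dot3 x (fun j => b j / norm3 b) * (b i / norm3 b)) =
      norm3 (cross3 x b) / norm3 b := by
  have hn : 0 < norm3 b := norm3_pos hb
  have hn2 : norm3 b ^ 2 = ∑ i, b i ^ 2 := norm3_sq b
  have hSb : (0:ℝ) < ∑ i, b i ^ 2 := by rw [← hn2]; positivity
  have hnn : norm3 b * norm3 b = ∑ i, b i ^ 2 := by rw [← hn2]; ring
  have h1 : (fun i => x i - dot3 x (fun j => b j / norm3 b) * (b i / norm3 b))
      = fun i => x i - (dot3 x b / (∑ j, b j ^ 2)) * b i := by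
    funext i
    simp only [dot3, ← mul_div_assoc, ← Finset.sum_div]
    rw [div_mul_eq_mul_div, div_div, hnn, ← div_mul_eq_mul_div]
  rw [h1]
  have hS' : b 0 ^ 2 + b 1 ^ 2 + b 2 ^ 2 ≠ 0 := by
    rw [Fin.sum_univ_three] at hSb; exact hSb.ne'
  unfold norm3
  rw [eq_div_iff (Real.sqrt_pos.mpr hSb).ne', ← Real.sqrt_mul (sumsq_nonneg _)]
  congr 1
  simp only [cross3, dot3, Fin.sum_univ_three, Matrix.cons_val_zero, Matrix.cons_val_one,
    Matrix.head_cons, Matrix.cons_val_two, Matrix.tail_cons]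
  field_simp
  ring

lemma cross3_add_left (b w : Fin 3 → ℝ) :
    cross3 (fun i => b i + w i) b = cross3 w b := by
  funext i
  fin_cases i <;> simp [cross3] <;> ring

lemma cross3_lag (w y : Fin 3 → ℝ) :
    (∑ i, cross3 w y i ^ 2) = (∑ i, w i ^ 2) * (∑ i, y i ^ 2) - (∑ i, w i * y i) ^ 2 := by
  simp only [cross3, Fin.sum_univ_three, Matrix.cons_val_zero, Matrix.cons_val_one,
    Matrix.head_cons, Matrix.cons_val_two, Matrix.tail_cons]
  ring

lemma norm3_cross_le (w y : Fin 3 → ℝ) :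
    norm3 (cross3 w y) ≤ norm3 w * norm3 y := by
  rw [show norm3 w * norm3 y = Real.sqrt ((∑ i, w i ^ 2) * (∑ i, y i ^ 2)) from
    (Real.sqrt_mul (sumsq_nonneg w) _).symm]
  apply Real.sqrt_le_sqrt
  rw [cross3_lag]
  nlinarith [sq_nonneg (∑ i, w i * y i)]

/-- the perpendicular distance from b + v to the line through the
origin in direction b equals |v × b|/|b|; consequently, for a canonical state the
coherence of the steered state b + Tᵀm equals this distance and is at most
|Tᵀm| ≤ c₁, where c₁ is the largest singular value of T. -/
theorem stmt11 (b v : Fin 3 → ℝ) (hb : b ≠ 0)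
    (u : Fin 3 → ℝ) (hu : u = fun i => b i / norm3 b)
    (T : Matrix (Fin 3) (Fin 3) ℝ) (m : Fin 3 → ℝ) (hm : norm3 m ≤ 1)
    (c1 : ℝ)
    (hc1 : IsGreatest {s | ∃ m' : Fin 3 → ℝ, norm3 m' = 1 ∧ s = norm3 (Ttm T m')} c1) :
    norm3 (fun i => (b i + v i) - dot3 (fun j => b j + v j) u * u i) =
      norm3 (cross3 v b) / norm3 b ∧
    norm3 (cross3 (fun i => b i + Ttm T m i) u) =
      norm3 (fun i => (b i + Ttm T m i) - dot3 (fun j => b j + Ttm T m j) u * u i) ∧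
    norm3 (cross3 (fun i => b i + Ttm T m i) u) ≤ norm3 (Ttm T m) ∧
    norm3 (Ttm T m) ≤ c1 := by
  subst hu
  have hn : 0 < norm3 b := norm3_pos hb
  set w := Ttm T m with hw
  have hpart1 : ∀ x : Fin 3 → ℝ,
      norm3 (fun i => (b i + x i) - dot3 (fun j => b j + x j) (fun j => b j / norm3 b) *
        (b i / norm3 b)) = norm3 (cross3 x b) / norm3 b := by
    intro x
    have h := key b hb (fun i => b i + x i)
    rw [cross3_add_left] at h
    exact h
  have hcru : cross3 (fun i => b i + w i) (fun i => b i / norm3 b)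
      = fun i => cross3 w b i / norm3 b := by
    funext i
    fin_cases i <;> simp [cross3] <;> ring
  have hcl : norm3 (cross3 (fun i => b i + w i) (fun j => b j / norm3 b))
      = norm3 (cross3 w b) / norm3 b := by
    rw [hcru, norm3_div _ _ hn]
  refine ⟨hpart1 v, ?_, ?_, ?_⟩
  · rw [hcl, hpart1 w]
  · rw [hcl, div_le_iff₀ hn]
    exact norm3_cross_le w b
  · obtain ⟨⟨m₀, hm₀, hc⟩, hub⟩ := hc1
    have hc1n : 0 ≤ c1 := hc ▸ norm3_nonneg _
    by_cases hm0 : m = 0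
    · have : w = 0 := by funext j; simp [hw, Ttm, hm0]
      rw [this]
      simpa [norm3] using hc1n
    · have hmp : 0 < norm3 m := norm3_pos hm0
      set m' : Fin 3 → ℝ := fun i => m i / norm3 m with hm'
      have hm'1 : norm3 m' = 1 := by
        rw [hm', norm3_div _ _ hmp, div_self hmp.ne']
      have hTm' : Ttm T m' = fun j => w j / norm3 m := by
        funext j
        simp only [Ttm, hm', hw, ← mul_div_assoc, ← Finset.sum_div]
      have hle : norm3 (Ttm T m') ≤ c1 := hub ⟨m', hm'1, rfl⟩
      rw [hTm', norm3_div _ _ hmp] at hle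
      calc norm3 w = norm3 w / norm3 m * norm3 m := by field_simp
        _ ≤ c1 * 1 := by
            apply mul_le_mul hle hm (le_of_lt hmp) hc1n
        _ = c1 := mul_one c1
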